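/- arXiv:math/0210426 — 4 statements merged into one kernel-verified Lean document; each statement's English description precedes it below -/
import Mathlib

section
/- Assume S is a finite set, ξ, η : S → ℤ, r : S×S×S×S → [0,∞) satisfies condition (A), π is a probability measure on S satisfying condition (C), and condition (D) holds. Then for every K, L ∈ ℤ: Σ π(ω₁)π(ω₂)π(ω₃) r(ω₁,ω₂;ω₁',ω₂') [ (η(ω₁)+η(ω₂)−2η(ω₃))(ξ(ω₂')−ξ(ω₂)) − (ξ(ω₁)+ξ(ω₂)−2ξ(ω₃))(η(ω₂')−η(ω₂)) ] = 0, where the sum is over all ω₁,ω₂,ω₃,ω₁',ω₂' ∈ S with ξ(ω₁)+ξ(ω₂)+ξ(ω₃) = K and η(ω₁)+η(ω₂)+η(ω₃) = L. -/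
section OnsagerAux

variable {S : Type*} [Fintype S]

private lemma onsager_sum3_reindex (σ : S × S × S ≃ S × S × S) (F : S → S → S → ℝ) :
    (∑ a : S, ∑ b : S, ∑ c : S, F (σ (a, b, c)).1 (σ (a, b, c)).2.1 (σ (a, b, c)).2.2)
      = ∑ a : S, ∑ b : S, ∑ c : S, F a b c := by
  have h := Fintype.sum_equiv σ
    (fun p : S × S × S => F (σ p).1 (σ p).2.1 (σ p).2.2)
    (fun p : S × S × S => F p.1 p.2.1 p.2.2) (fun p => rfl)
  simpa [Fintype.sum_prod_type] using h

private lemma onsager_sum3_cycle (F : S → S → S → ℝ) :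
    (∑ a : S, ∑ b : S, ∑ c : S, F b c a) = ∑ a : S, ∑ b : S, ∑ c : S, F a b c :=
  onsager_sum3_reindex ⟨fun p => (p.2.1, p.2.2, p.1), fun p => (p.2.2, p.1, p.2.1),
    fun _ => rfl, fun _ => rfl⟩ F

private lemma onsager_sum3_cycle' (F : S → S → S → ℝ) :
    (∑ a : S, ∑ b : S, ∑ c : S, F c a b) = ∑ a : S, ∑ b : S, ∑ c : S, F a b c :=
  onsager_sum3_reindex ⟨fun p => (p.2.2, p.1, p.2.1), fun p => (p.2.1, p.2.2, p.1),
    fun _ => rfl, fun _ => rfl⟩ F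

private lemma onsager_sum3_swap12 (F : S → S → S → ℝ) :
    (∑ a : S, ∑ b : S, ∑ c : S, F b a c) = ∑ a : S, ∑ b : S, ∑ c : S, F a b c :=
  onsager_sum3_reindex ⟨fun p => (p.2.1, p.1, p.2.2), fun p => (p.2.1, p.1, p.2.2),
    fun _ => rfl, fun _ => rfl⟩ F

private lemma onsager_sum3_swap13 (F : S → S → S → ℝ) :
    (∑ a : S, ∑ b : S, ∑ c : S, F c b a) = ∑ a : S, ∑ b : S, ∑ c : S, F a b c :=
  onsager_sum3_reindex ⟨fun p => (p.2.2, p.2.1, p.1), fun p => (p.2.2, p.2.1, p.1),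
    fun _ => rfl, fun _ => rfl⟩ F

private lemma onsager_sum3_swap23 (F : S → S → S → ℝ) :
    (∑ a : S, ∑ b : S, ∑ c : S, F a c b) = ∑ a : S, ∑ b : S, ∑ c : S, F a b c :=
  onsager_sum3_reindex ⟨fun p => (p.1, p.2.2, p.2.1), fun p => (p.1, p.2.2, p.2.1),
    fun _ => rfl, fun _ => rfl⟩ F

private lemma onsager_sum_rev4 (F : S → S → S → S → ℝ) :
    (∑ a : S, ∑ b : S, ∑ c : S, ∑ d : S, F d c b a)
      = ∑ a : S, ∑ b : S, ∑ c : S, ∑ d : S, F a b c d := by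
  have h := Fintype.sum_equiv
    (⟨fun p : S × S × S × S => (p.2.2.2, p.2.2.1, p.2.1, p.1),
      fun p => (p.2.2.2, p.2.2.1, p.2.1, p.1), fun _ => rfl, fun _ => rfl⟩ :
      (S × S × S × S) ≃ (S × S × S × S))
    (fun p : S × S × S × S => F p.2.2.2 p.2.2.1 p.2.1 p.1)
    (fun p : S × S × S × S => F p.1 p.2.1 p.2.2.1 p.2.2.2) (fun _ => rfl)
  simpa [Fintype.sum_prod_type] using h

end OnsagerAux

private lemma onsager_cancellation {S : Type*} [Fintype S]
    (ξ η : S → ℤ) (r : S → S → S → S → ℝ) (π : S → ℝ)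
    (hD : ∀ ω₁ ω₂ ω₃ : S,
      (∑ ω₁' : S, ∑ ω₂' : S, r ω₁ ω₂ ω₁' ω₂')
        + (∑ ω₁' : S, ∑ ω₂' : S, r ω₂ ω₃ ω₁' ω₂')
        + (∑ ω₁' : S, ∑ ω₂' : S, r ω₃ ω₁ ω₁' ω₂')
      = (∑ ω₁' : S, ∑ ω₂' : S, r ω₁ ω₃ ω₁' ω₂')
        + (∑ ω₁' : S, ∑ ω₂' : S, r ω₃ ω₂ ω₁' ω₂')
        + (∑ ω₁' : S, ∑ ω₂' : S, r ω₂ ω₁ ω₁' ω₂'))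
    (K L : ℤ) :
    (∑ x : S, ∑ y : S, ∑ z : S,
      (if ξ x + ξ y + ξ z = K ∧ η x + η y + η z = L then
        π x * π y * π z * (∑ c : S, ∑ d : S, r x y c d) *
          ((((η x : ℝ) + (η y : ℝ) - 2 * (η z : ℝ)) * ((ξ x : ℝ) - (ξ y : ℝ)))
            - (((ξ x : ℝ) + (ξ y : ℝ) - 2 * (ξ z : ℝ)) * ((η x : ℝ) - (η y : ℝ))))
      else 0)) = 0 := by
  classical
  set Φ : S → S → S → ℝ := fun x y z =>
    (if ξ x + ξ y + ξ z = K ∧ η x + η y + η z = L then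
        π x * π y * π z * (∑ c : S, ∑ d : S, r x y c d) *
          ((((η x : ℝ) + (η y : ℝ) - 2 * (η z : ℝ)) * ((ξ x : ℝ) - (ξ y : ℝ)))
            - (((ξ x : ℝ) + (ξ y : ℝ) - 2 * (ξ z : ℝ)) * ((η x : ℝ) - (η y : ℝ))))
      else 0) with hΦ
  show (∑ x : S, ∑ y : S, ∑ z : S, Φ x y z) = 0
  have hpt : ∀ x y z : S,
      Φ x y z + Φ y z x + Φ z x y + Φ y x z + Φ x z y + Φ z y x = 0 := by
    intro x y z
    simp only [hΦ]
    by_cases hp : ξ x + ξ y + ξ z = K ∧ η x + η y + η z = L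
    · obtain ⟨h1, h2⟩ := id hp
      have c2 : ξ y + ξ z + ξ x = K ∧ η y + η z + η x = L := ⟨by omega, by omega⟩
      have c3 : ξ z + ξ x + ξ y = K ∧ η z + η x + η y = L := ⟨by omega, by omega⟩
      have c4 : ξ y + ξ x + ξ z = K ∧ η y + η x + η z = L := ⟨by omega, by omega⟩
      have c5 : ξ x + ξ z + ξ y = K ∧ η x + η z + η y = L := ⟨by omega, by omega⟩
      have c6 : ξ z + ξ y + ξ x = K ∧ η z + η y + η x = L := ⟨by omega, by omega⟩
      rw [if_pos hp, if_pos c2, if_pos c3, if_pos c4, if_pos c5, if_pos c6]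
      linear_combination (π x * π y * π z *
        ((((η x : ℝ) + (η y : ℝ) - 2 * (η z : ℝ)) * ((ξ x : ℝ) - (ξ y : ℝ)))
          - (((ξ x : ℝ) + (ξ y : ℝ) - 2 * (ξ z : ℝ)) * ((η x : ℝ) - (η y : ℝ))))) * hD x y z
    · have c2 : ¬(ξ y + ξ z + ξ x = K ∧ η y + η z + η x = L) := fun hc => hp ⟨by omega, by omega⟩
      have c3 : ¬(ξ z + ξ x + ξ y = K ∧ η z + η x + η y = L) := fun hc => hp ⟨by omega, by omega⟩
      have c4 : ¬(ξ y + ξ x + ξ z = K ∧ η y + η x + η z = L) := fun hc => hp ⟨by omega, by omega⟩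
      have c5 : ¬(ξ x + ξ z + ξ y = K ∧ η x + η z + η y = L) := fun hc => hp ⟨by omega, by omega⟩
      have c6 : ¬(ξ z + ξ y + ξ x = K ∧ η z + η y + η x = L) := fun hc => hp ⟨by omega, by omega⟩
      rw [if_neg hp, if_neg c2, if_neg c3, if_neg c4, if_neg c5, if_neg c6]
      norm_num
  have key : (∑ x : S, ∑ y : S, ∑ z : S,
      (Φ x y z + Φ y z x + Φ z x y + Φ y x z + Φ x z y + Φ z y x)) = 0 := by
    simp only [hpt]
    simp
  simp only [Finset.sum_add_distrib] at key
  rw [onsager_sum3_cycle Φ, onsager_sum3_cycle' Φ, onsager_sum3_swap12 Φ,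
    onsager_sum3_swap23 Φ, onsager_sum3_swap13 Φ] at key
  linarith [key]

/-- the key cancellation identity on microcanonical shells,
from the proof of the Onsager-type identity (Lemma 1). -/
theorem onsager_shell_sum_eq_zero {S : Type*} [Fintype S]
    (ξ η : S → ℤ) (r : S → S → S → S → ℝ) (π : S → ℝ)
    (hr : ∀ ω₁ ω₂ ω₁' ω₂' : S, 0 ≤ r ω₁ ω₂ ω₁' ω₂')
    (hA : ∀ ω₁ ω₂ ω₁' ω₂' : S, 0 < r ω₁ ω₂ ω₁' ω₂' →
      ξ ω₁ + ξ ω₂ = ξ ω₁' + ξ ω₂' ∧ η ω₁ + η ω₂ = η ω₁' + η ω₂')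
    (hπ0 : ∀ ω : S, 0 ≤ π ω) (hπ1 : ∑ ω : S, π ω = 1)
    (hC : ∀ ω₁ ω₂ ω₁' ω₂' : S,
      π ω₁ * π ω₂ * r ω₁ ω₂ ω₁' ω₂' = π ω₂' * π ω₁' * r ω₂' ω₁' ω₂ ω₁)
    (hD : ∀ ω₁ ω₂ ω₃ : S,
      (∑ ω₁' : S, ∑ ω₂' : S, r ω₁ ω₂ ω₁' ω₂')
        + (∑ ω₁' : S, ∑ ω₂' : S, r ω₂ ω₃ ω₁' ω₂')
        + (∑ ω₁' : S, ∑ ω₂' : S, r ω₃ ω₁ ω₁' ω₂')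
      = (∑ ω₁' : S, ∑ ω₂' : S, r ω₁ ω₃ ω₁' ω₂')
        + (∑ ω₁' : S, ∑ ω₂' : S, r ω₃ ω₂ ω₁' ω₂')
        + (∑ ω₁' : S, ∑ ω₂' : S, r ω₂ ω₁ ω₁' ω₂'))
    (K L : ℤ) :
    ∑ ω₁ : S, ∑ ω₂ : S, ∑ ω₃ : S, ∑ ω₁' : S, ∑ ω₂' : S,
      (if ξ ω₁ + ξ ω₂ + ξ ω₃ = K ∧ η ω₁ + η ω₂ + η ω₃ = L then
        π ω₁ * π ω₂ * π ω₃ * r ω₁ ω₂ ω₁' ω₂' *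
          ((((η ω₁ : ℝ) + (η ω₂ : ℝ) - 2 * (η ω₃ : ℝ)) * ((ξ ω₂' : ℝ) - (ξ ω₂ : ℝ)))
            - (((ξ ω₁ : ℝ) + (ξ ω₂ : ℝ) - 2 * (ξ ω₃ : ℝ)) * ((η ω₂' : ℝ) - (η ω₂ : ℝ))))
      else 0) = 0 := by
  classical
  set q : S → S → S → S → S → ℝ := fun a b z c d =>
    (if ξ a + ξ b + ξ z = K ∧ η a + η b + η z = L then
        π a * π b * π z * r a b c d *
          ((((η a : ℝ) + (η b : ℝ) - 2 * (η z : ℝ)) * ((ξ d : ℝ) - (ξ b : ℝ)))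
            - (((ξ a : ℝ) + (ξ b : ℝ) - 2 * (ξ z : ℝ)) * ((η d : ℝ) - (η b : ℝ))))
      else 0) with hq
  set u : S → S → S → S → S → ℝ := fun a b z c d =>
    (if ξ a + ξ b + ξ z = K ∧ η a + η b + η z = L then
        π a * π b * π z * r a b c d *
          ((((η a : ℝ) + (η b : ℝ) - 2 * (η z : ℝ)) * (ξ d : ℝ))
            - (((ξ a : ℝ) + (ξ b : ℝ) - 2 * (ξ z : ℝ)) * (η d : ℝ)))
      else 0) with hu
  set v : S → S → S → S → S → ℝ := fun a b z c d =>
    (if ξ a + ξ b + ξ z = K ∧ η a + η b + η z = L then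
        π a * π b * π z * r a b c d *
          ((((η a : ℝ) + (η b : ℝ) - 2 * (η z : ℝ)) * (ξ b : ℝ))
            - (((ξ a : ℝ) + (ξ b : ℝ) - 2 * (ξ z : ℝ)) * (η b : ℝ)))
      else 0) with hv
  set w : S → S → S → S → S → ℝ := fun a b z c d =>
    (if ξ a + ξ b + ξ z = K ∧ η a + η b + η z = L then
        π a * π b * π z * r a b c d *
          ((((η a : ℝ) + (η b : ℝ) - 2 * (η z : ℝ)) * (ξ a : ℝ))
            - (((ξ a : ℝ) + (ξ b : ℝ) - 2 * (ξ z : ℝ)) * (η a : ℝ)))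
      else 0) with hw
  show (∑ a : S, ∑ b : S, ∑ z : S, ∑ c : S, ∑ d : S, q a b z c d) = 0
  -- split the integrand
  have hq_split : ∀ a b z c d : S, q a b z c d = u a b z c d - v a b z c d := by
    intro a b z c d
    simp only [hq, hu, hv]
    by_cases hp : ξ a + ξ b + ξ z = K ∧ η a + η b + η z = L
    · rw [if_pos hp, if_pos hp, if_pos hp]; ring
    · rw [if_neg hp, if_neg hp, if_neg hp]; ring
  -- detailed-balance reversal, pointwise
  have hrev : ∀ a b z c d : S, u a b z c d = w d c z b a := by
    intro a b z c d
    simp only [hu, hw]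
    rcases (hr a b c d).eq_or_lt with h0 | hpos
    · have hz0 : π d * π c * r d c b a = 0 := by
        rw [← hC a b c d, ← h0, mul_zero]
      trans (0 : ℝ)
      · rw [← h0]; simp
      · by_cases h1 : ξ d + ξ c + ξ z = K ∧ η d + η c + η z = L
        · rw [if_pos h1]
          linear_combination (-(π z * ((((η d : ℝ) + (η c : ℝ) - 2 * (η z : ℝ)) * (ξ d : ℝ))
            - (((ξ d : ℝ) + (ξ c : ℝ) - 2 * (ξ z : ℝ)) * (η d : ℝ))))) * hz0
        · rw [if_neg h1]
    · obtain ⟨e1, e2⟩ := hA a b c d hpos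
      have e1' : (ξ a : ℝ) + (ξ b : ℝ) = (ξ c : ℝ) + (ξ d : ℝ) := by exact_mod_cast e1
      have e2' : (η a : ℝ) + (η b : ℝ) = (η c : ℝ) + (η d : ℝ) := by exact_mod_cast e2
      have hiff : (ξ a + ξ b + ξ z = K ∧ η a + η b + η z = L)
          ↔ (ξ d + ξ c + ξ z = K ∧ η d + η c + η z = L) := by
        constructor <;> intro h <;> exact ⟨by omega, by omega⟩
      refine if_congr hiff ?_ rfl
      linear_combination (π z * ((((η a : ℝ) + (η b : ℝ) - 2 * (η z : ℝ)) * (ξ d : ℝ))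
          - (((ξ a : ℝ) + (ξ b : ℝ) - 2 * (ξ z : ℝ)) * (η d : ℝ)))) * hC a b c d
        + (π d * π c * r d c b a * π z) * ((ξ d : ℝ) * e2' - (η d : ℝ) * e1')
  -- reversal at the level of the quadruple sums (for fixed z)
  have step2 : ∀ z : S, (∑ a : S, ∑ b : S, ∑ c : S, ∑ d : S, u a b z c d)
      = ∑ a : S, ∑ b : S, ∑ c : S, ∑ d : S, w a b z c d := by
    intro z
    calc (∑ a : S, ∑ b : S, ∑ c : S, ∑ d : S, u a b z c d)
        = ∑ a : S, ∑ b : S, ∑ c : S, ∑ d : S, w d c z b a :=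
          Finset.sum_congr rfl fun a _ => Finset.sum_congr rfl fun b _ =>
            Finset.sum_congr rfl fun c _ => Finset.sum_congr rfl fun d _ => hrev a b z c d
      _ = ∑ a : S, ∑ b : S, ∑ c : S, ∑ d : S, w a b z c d :=
          onsager_sum_rev4 (fun p1 p2 p3 p4 => w p1 p2 z p3 p4)
  -- collapse the primed sums
  have step3 : ∀ z a b : S, (∑ c : S, ∑ d : S, (w a b z c d - v a b z c d))
      = (if ξ a + ξ b + ξ z = K ∧ η a + η b + η z = L then
          π a * π b * π z * (∑ c : S, ∑ d : S, r a b c d) *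
            ((((η a : ℝ) + (η b : ℝ) - 2 * (η z : ℝ)) * ((ξ a : ℝ) - (ξ b : ℝ)))
              - (((ξ a : ℝ) + (ξ b : ℝ) - 2 * (ξ z : ℝ)) * ((η a : ℝ) - (η b : ℝ))))
        else 0) := by
    intro z a b
    by_cases hp : ξ a + ξ b + ξ z = K ∧ η a + η b + η z = L
    · rw [if_pos hp]
      calc (∑ c : S, ∑ d : S, (w a b z c d - v a b z c d))
          = ∑ c : S, ∑ d : S, (π a * π b * π z *
              ((((η a : ℝ) + (η b : ℝ) - 2 * (η z : ℝ)) * ((ξ a : ℝ) - (ξ b : ℝ)))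
                - (((ξ a : ℝ) + (ξ b : ℝ) - 2 * (ξ z : ℝ)) * ((η a : ℝ) - (η b : ℝ)))))
              * r a b c d := by
            refine Finset.sum_congr rfl fun c _ => Finset.sum_congr rfl fun d _ => ?_
            simp only [hw, hv, if_pos hp]; ring
        _ = (π a * π b * π z *
              ((((η a : ℝ) + (η b : ℝ) - 2 * (η z : ℝ)) * ((ξ a : ℝ) - (ξ b : ℝ)))
                - (((ξ a : ℝ) + (ξ b : ℝ) - 2 * (ξ z : ℝ)) * ((η a : ℝ) - (η b : ℝ)))))
              * (∑ c : S, ∑ d : S, r a b c d) := by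
            simp only [← Finset.mul_sum]
        _ = π a * π b * π z * (∑ c : S, ∑ d : S, r a b c d) *
              ((((η a : ℝ) + (η b : ℝ) - 2 * (η z : ℝ)) * ((ξ a : ℝ) - (ξ b : ℝ)))
                - (((ξ a : ℝ) + (ξ b : ℝ) - 2 * (ξ z : ℝ)) * ((η a : ℝ) - (η b : ℝ)))) := by
            ring
    · rw [if_neg hp]
      simp only [hw, hv, if_neg hp]
      simp
  -- assemble, for each fixed z
  have step4 : ∀ z : S, (∑ a : S, ∑ b : S, ∑ c : S, ∑ d : S, q a b z c d)
      = ∑ a : S, ∑ b : S,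
          (if ξ a + ξ b + ξ z = K ∧ η a + η b + η z = L then
            π a * π b * π z * (∑ c : S, ∑ d : S, r a b c d) *
              ((((η a : ℝ) + (η b : ℝ) - 2 * (η z : ℝ)) * ((ξ a : ℝ) - (ξ b : ℝ)))
                - (((ξ a : ℝ) + (ξ b : ℝ) - 2 * (ξ z : ℝ)) * ((η a : ℝ) - (η b : ℝ))))
          else 0) := by
    intro z
    calc (∑ a : S, ∑ b : S, ∑ c : S, ∑ d : S, q a b z c d)
        = ∑ a : S, ∑ b : S, ∑ c : S, ∑ d : S, (u a b z c d - v a b z c d) := by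
          simp only [hq_split]
      _ = (∑ a : S, ∑ b : S, ∑ c : S, ∑ d : S, u a b z c d)
            - ∑ a : S, ∑ b : S, ∑ c : S, ∑ d : S, v a b z c d := by
          simp only [Finset.sum_sub_distrib]
      _ = (∑ a : S, ∑ b : S, ∑ c : S, ∑ d : S, w a b z c d)
            - ∑ a : S, ∑ b : S, ∑ c : S, ∑ d : S, v a b z c d := by
          rw [step2 z]
      _ = ∑ a : S, ∑ b : S, ∑ c : S, ∑ d : S, (w a b z c d - v a b z c d) := by
          simp only [Finset.sum_sub_distrib]
      _ = _ := Finset.sum_congr rfl fun a _ => Finset.sum_congr rfl fun b _ => step3 z a b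
  -- move the spectator variable out, apply step4, move it back, and conclude
  calc (∑ a : S, ∑ b : S, ∑ z : S, ∑ c : S, ∑ d : S, q a b z c d)
      = ∑ z : S, ∑ a : S, ∑ b : S, ∑ c : S, ∑ d : S, q a b z c d :=
        (onsager_sum3_cycle (fun a b z => ∑ c : S, ∑ d : S, q a b z c d)).symm
    _ = ∑ z : S, ∑ a : S, ∑ b : S,
          (if ξ a + ξ b + ξ z = K ∧ η a + η b + η z = L then
            π a * π b * π z * (∑ c : S, ∑ d : S, r a b c d) *
              ((((η a : ℝ) + (η b : ℝ) - 2 * (η z : ℝ)) * ((ξ a : ℝ) - (ξ b : ℝ)))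
                - (((ξ a : ℝ) + (ξ b : ℝ) - 2 * (ξ z : ℝ)) * ((η a : ℝ) - (η b : ℝ))))
          else 0) := Finset.sum_congr rfl fun z _ => step4 z
    _ = ∑ a : S, ∑ b : S, ∑ z : S,
          (if ξ a + ξ b + ξ z = K ∧ η a + η b + η z = L then
            π a * π b * π z * (∑ c : S, ∑ d : S, r a b c d) *
              ((((η a : ℝ) + (η b : ℝ) - 2 * (η z : ℝ)) * ((ξ a : ℝ) - (ξ b : ℝ)))
                - (((ξ a : ℝ) + (ξ b : ℝ) - 2 * (ξ z : ℝ)) * ((η a : ℝ) - (η b : ℝ))))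
          else 0) :=
        onsager_sum3_cycle (fun x y z =>
          (if ξ x + ξ y + ξ z = K ∧ η x + η y + η z = L then
            π x * π y * π z * (∑ c : S, ∑ d : S, r x y c d) *
              ((((η x : ℝ) + (η y : ℝ) - 2 * (η z : ℝ)) * ((ξ x : ℝ) - (ξ y : ℝ)))
                - (((ξ x : ℝ) + (ξ y : ℝ) - 2 * (ξ z : ℝ)) * ((η x : ℝ) - (η y : ℝ))))
          else 0))
    _ = 0 := onsager_cancellation ξ η r π hD K L
end

section
/- Assume S is a finite set, ξ, η : S → ℤ, r : S×S×S×S → [0,∞) satisfies condition (A), π is a probability measure on S satisfying condition (C), and condition (D) holds. Then there exists a differentiable potential function U : ℝ² → ℝ such that ∂U/∂θ (θ,τ) = Φ(θ,τ) and ∂U/∂τ (θ,τ) = Ψ(θ,τ) for every (θ,τ) ∈ ℝ². -/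
open scoped BigOperators

section AuxOnsager

variable {S : Type*} [Fintype S]

private lemma sum4_prod (G : S × S × S × S → ℝ) :
    (∑ q : S × S × S × S, G q)
      = ∑ a : S, ∑ b : S, ∑ c : S, ∑ d : S, G (a, b, c, d) := by
  rw [Fintype.sum_prod_type]
  refine Finset.sum_congr rfl fun a _ => ?_
  rw [Fintype.sum_prod_type]
  refine Finset.sum_congr rfl fun b _ => ?_
  rw [Fintype.sum_prod_type]

private lemma sum4_rev' (F : S → S → S → S → ℝ) :
    (∑ a : S, ∑ b : S, ∑ c : S, ∑ d : S, F a b c d)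
      = ∑ a : S, ∑ b : S, ∑ c : S, ∑ d : S, F d c b a := by
  classical
  have hbij : Function.Bijective (fun q : S × S × S × S => (q.2.2.2, q.2.2.1, q.2.1, q.1)) :=
    Function.Involutive.bijective (fun q => rfl)
  calc (∑ a : S, ∑ b : S, ∑ c : S, ∑ d : S, F a b c d)
      = ∑ q : S × S × S × S, F q.1 q.2.1 q.2.2.1 q.2.2.2 :=
        (sum4_prod (fun q => F q.1 q.2.1 q.2.2.1 q.2.2.2)).symm
    _ = ∑ q : S × S × S × S, F q.2.2.2 q.2.2.1 q.2.1 q.1 :=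
        Fintype.sum_bijective _ hbij _ _ (fun q => rfl)
    _ = ∑ a : S, ∑ b : S, ∑ c : S, ∑ d : S, F d c b a :=
        sum4_prod (fun q => F q.2.2.2 q.2.2.1 q.2.1 q.1)

private lemma hasFDerivAt_expPair (a b c : ℝ) (p : ℝ × ℝ) :
    HasFDerivAt (fun q : ℝ × ℝ => Real.exp (q.1 * a + q.2 * b) * c)
      ((Real.exp (p.1 * a + p.2 * b) * c) •
        (a • ContinuousLinearMap.fst ℝ ℝ ℝ + b • ContinuousLinearMap.snd ℝ ℝ ℝ)) p := by
  have h1 : HasFDerivAt (fun q : ℝ × ℝ => q.1 * a + q.2 * b)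
      (a • ContinuousLinearMap.fst ℝ ℝ ℝ + b • ContinuousLinearMap.snd ℝ ℝ ℝ) p :=
    ((hasFDerivAt_fst).mul_const a).add ((hasFDerivAt_snd).mul_const b)
  have h3 := (h1.exp).mul_const c
  rw [mul_comm (Real.exp (p.1 * a + p.2 * b)) c, ← smul_smul]
  exact h3

end AuxOnsager

/-- The single-site Gibbs measure `π_{θ,τ}(ω) = π(ω) exp(θξ(ω)+τη(ω)−G(θ,τ))`,
where `G(θ,τ) = log Σ_ω e^{θξ(ω)+τη(ω)} π(ω)`. -/
noncomputable def gibbsMeasure {S : Type*} [Fintype S]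
    (π : S → ℝ) (ξ η : S → ℤ) (θ τ : ℝ) (ω : S) : ℝ :=
  π ω * Real.exp (θ * (ξ ω : ℝ) + τ * (η ω : ℝ) -
    Real.log (∑ ω' : S, Real.exp (θ * (ξ ω' : ℝ) + τ * (η ω' : ℝ)) * π ω'))

/-- The macroscopic flux of the conserved quantity `g`:
`(θ,τ) ↦ Σ r(ω₁,ω₂;ω₁',ω₂')(g(ω₂')−g(ω₂)) π_{θ,τ}(ω₁) π_{θ,τ}(ω₂)`. -/
noncomputable def macroFlux {S : Type*} [Fintype S]
    (r : S → S → S → S → ℝ) (π : S → ℝ) (ξ η g : S → ℤ) (p : ℝ × ℝ) : ℝ :=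
  ∑ ω₁ : S, ∑ ω₂ : S,
    (∑ ω₁' : S, ∑ ω₂' : S, r ω₁ ω₂ ω₁' ω₂' * ((g ω₂' : ℝ) - (g ω₂ : ℝ))) *
      gibbsMeasure π ξ η p.1 p.2 ω₁ * gibbsMeasure π ξ η p.1 p.2 ω₂

set_option maxHeartbeats 1000000 in
/-- existence of a potential `U` with `∂U/∂θ = Φ`, `∂U/∂τ = Ψ`. -/
theorem exists_onsager_potential {S : Type*} [Fintype S]
    (ξ η : S → ℤ) (r : S → S → S → S → ℝ) (π : S → ℝ)
    (hr : ∀ ω₁ ω₂ ω₁' ω₂' : S, 0 ≤ r ω₁ ω₂ ω₁' ω₂')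
    (hA : ∀ ω₁ ω₂ ω₁' ω₂' : S, 0 < r ω₁ ω₂ ω₁' ω₂' →
      ξ ω₁ + ξ ω₂ = ξ ω₁' + ξ ω₂' ∧ η ω₁ + η ω₂ = η ω₁' + η ω₂')
    (hπ0 : ∀ ω : S, 0 ≤ π ω) (hπ1 : ∑ ω : S, π ω = 1)
    (hC : ∀ ω₁ ω₂ ω₁' ω₂' : S,
      π ω₁ * π ω₂ * r ω₁ ω₂ ω₁' ω₂' = π ω₂' * π ω₁' * r ω₂' ω₁' ω₂ ω₁)
    (hD : ∀ ω₁ ω₂ ω₃ : S,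
      (∑ ω₁' : S, ∑ ω₂' : S, r ω₁ ω₂ ω₁' ω₂')
        + (∑ ω₁' : S, ∑ ω₂' : S, r ω₂ ω₃ ω₁' ω₂')
        + (∑ ω₁' : S, ∑ ω₂' : S, r ω₃ ω₁ ω₁' ω₂')
      = (∑ ω₁' : S, ∑ ω₂' : S, r ω₁ ω₃ ω₁' ω₂')
        + (∑ ω₁' : S, ∑ ω₂' : S, r ω₃ ω₂ ω₁' ω₂')
        + (∑ ω₁' : S, ∑ ω₂' : S, r ω₂ ω₁ ω₁' ω₂')) :
    ∃ U : ℝ × ℝ → ℝ, Differentiable ℝ U ∧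
      ∀ p : ℝ × ℝ,
        fderiv ℝ U p (1, 0) = macroFlux r π ξ η ξ p ∧
        fderiv ℝ U p (0, 1) = macroFlux r π ξ η η p := by
  classical
  -- S is nonempty
  have hne : Nonempty S := by
    by_contra h
    rw [not_nonempty_iff] at h
    rw [Finset.univ_eq_empty, Finset.sum_empty] at hπ1
    norm_num at hπ1
  obtain ⟨ω₀⟩ := hne
  -- total rates and the potential function u on S
  set R : S → S → ℝ := fun a b => ∑ c : S, ∑ d : S, r a b c d with hRdef
  set u : S → ℝ := fun a => R a ω₀ - R ω₀ a with hudef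
  have hRu : ∀ a b : S, R a b - R b a = u a - u b := by
    intro a b
    have h := hD a b ω₀
    simp only [hudef, hRdef]
    linarith
  -- weights
  set E : ℝ × ℝ → S → ℝ :=
    fun p ω => Real.exp (p.1 * (ξ ω : ℝ) + p.2 * (η ω : ℝ)) with hEdef
  set w : ℝ × ℝ → S → ℝ := fun p ω => E p ω * π ω with hwdef
  set Z : ℝ × ℝ → ℝ := fun p => ∑ ω : S, w p ω with hZdef
  set N : ℝ × ℝ → ℝ := fun p => ∑ ω : S, u ω * w p ω with hNdef
  have hZpos : ∀ p, 0 < Z p := by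
    intro p
    obtain ⟨ω₁, hω₁⟩ : ∃ ω, 0 < π ω := by
      by_contra h
      push_neg at h
      have : (∑ ω : S, π ω) ≤ 0 := Finset.sum_nonpos fun ω _ => h ω
      linarith
    have h1 : 0 < w p ω₁ := mul_pos (Real.exp_pos _) hω₁
    refine lt_of_lt_of_le h1 ?_
    refine Finset.single_le_sum (f := w p) (fun ω _ => ?_) (Finset.mem_univ ω₁)
    exact mul_nonneg (Real.exp_pos _).le (hπ0 ω)
  have hZne : ∀ p, Z p ≠ 0 := fun p => (hZpos p).ne'
  -- gibbs measure as w/Z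
  have hgibbs : ∀ (p : ℝ × ℝ) (ω : S),
      gibbsMeasure π ξ η p.1 p.2 ω = w p ω / Z p := by
    intro p ω
    rw [gibbsMeasure, Real.exp_sub]
    have hZform : (∑ ω' : S, Real.exp (p.1 * (ξ ω' : ℝ) + p.2 * (η ω' : ℝ)) * π ω') = Z p := by
      simp only [hZdef, hwdef, hEdef]
    rw [hZform, Real.exp_log (hZpos p)]
    simp only [hwdef, hEdef]
    ring
  -- the key flux computation
  have expand : ∀ g h : S → ℝ, (∑ a : S, ∑ b : S, g a * h b) = (∑ a : S, g a) * (∑ b : S, h b) :=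
    fun g h => (Finset.sum_mul_sum Finset.univ Finset.univ g h).symm
  have keyflux : ∀ (p : ℝ × ℝ) (f : S → ℤ),
      macroFlux r π ξ η f p
        = ((∑ ω : S, u ω * ((f ω : ℝ) * w p ω)) * Z p
            - N p * (∑ ω : S, (f ω : ℝ) * w p ω)) / Z p ^ 2 := by
    intro p f
    -- termwise use of detailed balance (C) and conservation (A)
    have hterm : ∀ a b c d : S,
        r a b c d * (f d : ℝ) * w p a * w p b
          = r d c b a * (f d : ℝ) * w p d * w p c := by
      intro a b c d
      have hCc := hC a b c d
      rcases eq_or_lt_of_le (hr d c b a) with h0 | hpos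
      · have h1 : π a * π b * r a b c d = 0 := by rw [hCc, ← h0, mul_zero]
        calc r a b c d * (f d : ℝ) * w p a * w p b
            = (f d : ℝ) * (E p a * E p b) * (π a * π b * r a b c d) := by
              simp only [hwdef]; ring
          _ = 0 := by rw [h1, mul_zero]
          _ = r d c b a * (f d : ℝ) * w p d * w p c := by rw [← h0]; ring
      · obtain ⟨hξ, hη⟩ := hA d c b a hpos
        have hξ' : (ξ d : ℝ) + (ξ c : ℝ) = (ξ b : ℝ) + (ξ a : ℝ) := by exact_mod_cast hξ
        have hη' : (η d : ℝ) + (η c : ℝ) = (η b : ℝ) + (η a : ℝ) := by exact_mod_cast hη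
        have hexp : E p a * E p b = E p d * E p c := by
          simp only [hEdef, ← Real.exp_add]
          congr 1
          linear_combination p.1 * hξ'.symm + p.2 * hη'.symm
        calc r a b c d * (f d : ℝ) * w p a * w p b
            = (f d : ℝ) * (E p a * E p b) * (π a * π b * r a b c d) := by
              simp only [hwdef]; ring
          _ = (f d : ℝ) * (E p d * E p c) * (π d * π c * r d c b a) := by rw [hexp, hCc]
          _ = r d c b a * (f d : ℝ) * w p d * w p c := by simp only [hwdef]; ring
    -- the relabelling identity
    have key1 : (∑ a : S, ∑ b : S, ∑ c : S, ∑ d : S,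
          r a b c d * (f d : ℝ) * w p a * w p b)
        = ∑ a : S, ∑ b : S, ∑ c : S, ∑ d : S,
            r a b c d * (f a : ℝ) * w p a * w p b := by
      calc (∑ a : S, ∑ b : S, ∑ c : S, ∑ d : S, r a b c d * (f d : ℝ) * w p a * w p b)
          = ∑ a : S, ∑ b : S, ∑ c : S, ∑ d : S, r d c b a * (f d : ℝ) * w p d * w p c :=
            Finset.sum_congr rfl fun a _ => Finset.sum_congr rfl fun b _ =>
              Finset.sum_congr rfl fun c _ => Finset.sum_congr rfl fun d _ => hterm a b c d
        _ = _ := sum4_rev' (fun a b c d => r d c b a * (f d : ℝ) * w p d * w p c)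
    -- unfold the gibbs measures
    rw [macroFlux]
    simp only [hgibbs p]
    -- pull out the normalisation
    have step1 : (∑ a : S, ∑ b : S,
          (∑ c : S, ∑ d : S, r a b c d * ((f d : ℝ) - (f b : ℝ))) *
            (w p a / Z p) * (w p b / Z p))
        = (∑ a : S, ∑ b : S,
            (∑ c : S, ∑ d : S, r a b c d * ((f d : ℝ) - (f b : ℝ))) * w p a * w p b)
              / Z p ^ 2 := by
      rw [Finset.sum_div]
      refine Finset.sum_congr rfl fun a _ => ?_
      rw [Finset.sum_div]
      refine Finset.sum_congr rfl fun b _ => ?_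
      field_simp
    rw [step1]
    congr 1
    -- now the numerator identity
    calc (∑ a : S, ∑ b : S,
          (∑ c : S, ∑ d : S, r a b c d * ((f d : ℝ) - (f b : ℝ))) * w p a * w p b)
        = ∑ a : S, ∑ b : S, ∑ c : S, ∑ d : S,
            (r a b c d * (f d : ℝ) * w p a * w p b
              - r a b c d * (f b : ℝ) * w p a * w p b) := by
          refine Finset.sum_congr rfl fun a _ => Finset.sum_congr rfl fun b _ => ?_
          simp only [Finset.sum_mul]
          exact Finset.sum_congr rfl fun c _ => Finset.sum_congr rfl fun d _ => by ring
      _ = (∑ a : S, ∑ b : S, ∑ c : S, ∑ d : S, r a b c d * (f d : ℝ) * w p a * w p b)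
            - (∑ a : S, ∑ b : S, ∑ c : S, ∑ d : S, r a b c d * (f b : ℝ) * w p a * w p b) := by
          simp only [Finset.sum_sub_distrib]
      _ = (∑ a : S, ∑ b : S, ∑ c : S, ∑ d : S, r a b c d * (f a : ℝ) * w p a * w p b)
            - (∑ a : S, ∑ b : S, ∑ c : S, ∑ d : S, r a b c d * (f b : ℝ) * w p a * w p b) := by
          rw [key1]
      _ = (∑ a : S, ∑ b : S, R a b * ((f a : ℝ) * w p a * w p b))
            - (∑ a : S, ∑ b : S, R a b * ((f b : ℝ) * w p a * w p b)) := by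
          congr 1 <;>
          · refine Finset.sum_congr rfl fun a _ => Finset.sum_congr rfl fun b _ => ?_
            rw [hRdef]
            simp only [Finset.sum_mul]
            exact Finset.sum_congr rfl fun c _ => Finset.sum_congr rfl fun d _ => by ring
      _ = (∑ a : S, ∑ b : S, R a b * ((f a : ℝ) * w p a * w p b))
            - (∑ a : S, ∑ b : S, R b a * ((f a : ℝ) * w p b * w p a)) := by
          rw [show (∑ a : S, ∑ b : S, R a b * ((f b : ℝ) * w p a * w p b))
              = ∑ a : S, ∑ b : S, R b a * ((f a : ℝ) * w p b * w p a) from Finset.sum_comm]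
      _ = ∑ a : S, ∑ b : S, ((R a b - R b a) * ((f a : ℝ) * w p a * w p b)) := by
          simp only [← Finset.sum_sub_distrib]
          exact Finset.sum_congr rfl fun a _ => Finset.sum_congr rfl fun b _ => by ring
      _ = ∑ a : S, ∑ b : S, ((u a - u b) * ((f a : ℝ) * w p a * w p b)) := by
          exact Finset.sum_congr rfl fun a _ => Finset.sum_congr rfl fun b _ => by rw [hRu a b]
      _ = (∑ a : S, ∑ b : S, (u a * ((f a : ℝ) * w p a)) * w p b)
            - (∑ a : S, ∑ b : S, ((f a : ℝ) * w p a) * (u b * w p b)) := by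
          simp only [← Finset.sum_sub_distrib]
          exact Finset.sum_congr rfl fun a _ => Finset.sum_congr rfl fun b _ => by ring
      _ = (∑ ω : S, u ω * ((f ω : ℝ) * w p ω)) * Z p
            - N p * (∑ ω : S, (f ω : ℝ) * w p ω) := by
          rw [expand, expand]
          simp only [hZdef, hNdef]
          ring
  -- the derivative structure
  set L : S → (ℝ × ℝ →L[ℝ] ℝ) := fun ω =>
    (ξ ω : ℝ) • ContinuousLinearMap.fst ℝ ℝ ℝ + (η ω : ℝ) • ContinuousLinearMap.snd ℝ ℝ ℝ
    with hLdef
  have hZd : ∀ p, HasFDerivAt Z (∑ ω : S, w p ω • L ω) p := by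
    intro p
    simp only [hZdef, hwdef, hEdef, hLdef]
    exact HasFDerivAt.fun_sum fun ω _ => hasFDerivAt_expPair _ _ _ p
  have hNd : ∀ p, HasFDerivAt N (∑ ω : S, u ω • (w p ω • L ω)) p := by
    intro p
    simp only [hNdef, hwdef, hEdef, hLdef]
    exact HasFDerivAt.fun_sum fun ω _ => (hasFDerivAt_expPair _ _ _ p).const_mul (u ω)
  set U : ℝ × ℝ → ℝ := fun p => N p * (Z p)⁻¹ with hUdef
  have hUd : ∀ p, HasFDerivAt U
      (N p • ((-(Z p ^ 2)⁻¹) • (∑ ω : S, w p ω • L ω))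
        + (Z p)⁻¹ • (∑ ω : S, u ω • (w p ω • L ω))) p := by
    intro p
    have hinv : HasFDerivAt (fun q => (Z q)⁻¹) ((-(Z p ^ 2)⁻¹) • (∑ ω : S, w p ω • L ω)) p :=
      (hasDerivAt_inv (hZne p)).comp_hasFDerivAt p (hZd p)
    exact (hNd p).mul hinv
  refine ⟨U, fun p => (hUd p).differentiableAt, fun p => ?_⟩
  clear_value L U N Z w E u R
  rw [(hUd p).fderiv]
  constructor
  · rw [keyflux p ξ]
    simp only [ContinuousLinearMap.add_apply, ContinuousLinearMap.smul_apply,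
      ContinuousLinearMap.coe_sum', Finset.sum_apply, hLdef,
      ContinuousLinearMap.coe_fst', ContinuousLinearMap.coe_snd']
    simp only [smul_eq_mul]
    simp only [mul_one, mul_zero, add_zero]
    have e1 : (∑ x : S, w p x * (ξ x : ℝ)) = ∑ x : S, (ξ x : ℝ) * w p x :=
      Finset.sum_congr rfl fun _ _ => mul_comm _ _
    have e2 : (∑ x : S, u x * (w p x * (ξ x : ℝ)))
        = ∑ x : S, u x * ((ξ x : ℝ) * w p x) :=
      Finset.sum_congr rfl fun _ _ => by ring
    rw [e1, e2]
    field_simp [hZne p]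
    ring
  · rw [keyflux p η]
    simp only [ContinuousLinearMap.add_apply, ContinuousLinearMap.smul_apply,
      ContinuousLinearMap.coe_sum', Finset.sum_apply, hLdef,
      ContinuousLinearMap.coe_fst', ContinuousLinearMap.coe_snd']
    simp only [smul_eq_mul]
    simp only [mul_one, mul_zero, zero_add]
    have e1 : (∑ x : S, w p x * (η x : ℝ)) = ∑ x : S, (η x : ℝ) * w p x :=
      Finset.sum_congr rfl fun _ _ => mul_comm _ _
    have e2 : (∑ x : S, u x * (w p x * (η x : ℝ)))
        = ∑ x : S, u x * ((η x : ℝ) * w p x) :=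
      Finset.sum_congr rfl fun _ _ => by ring
    rw [e1, e2]
    field_simp [hZne p]
    ring
end

section
/- (n-component Onsager relations.) Let n ≥ 2, let S be a finite set, let ξ = (ξ₁,…,ξₙ) : S → ℤⁿ, and let r : S×S×S×S → [0,∞) satisfy: (A') r(ω₁,ω₂;ω₁',ω₂') > 0 implies ξᵢ(ω₁)+ξᵢ(ω₂) = ξᵢ(ω₁')+ξᵢ(ω₂') for every i = 1,…,n; (C) there is a probability measure π on S with π(ω₁)π(ω₂)r(ω₁,ω₂;ω₁',ω₂') = π(ω₂')π(ω₁')r(ω₂',ω₁';ω₂,ω₁) for all arguments; (D) with R(ω₁,ω₂) := Σ_{ω₁',ω₂'} r(ω₁,ω₂;ω₁',ω₂'), R(ω₁,ω₂)+R(ω₂,ω₃)+R(ω₃,ω₁) = R(ω₁,ω₃)+R(ω₃,ω₂)+R(ω₂,ω₁) for all ω₁,ω₂,ω₃. Define G(θ) := log Σ_{ω∈S} e^{θ·ξ(ω)} π(ω), π_θ(ω) := π(ω) exp(θ·ξ(ω)−G(θ)) for θ ∈ ℝⁿ, and Φᵢ(θ) := Σ_{ω₁,ω₂,ω₁',ω₂'∈S}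 r(ω₁,ω₂;ω₁',ω₂')(ξᵢ(ω₂')−ξᵢ(ω₂)) π_θ(ω₁)π_θ(ω₂). Then for all i, j ∈ {1,…,n} and all θ ∈ ℝⁿ, ∂Φᵢ/∂θⱼ (θ) = ∂Φⱼ/∂θᵢ (θ); i.e., the Jacobian matrix of θ ↦ Φ(θ) is symmetric. -/
open scoped BigOperators

/-- Single-site Gibbs measure for `n` conserved quantities:
`π_θ(ω) = π(ω) exp(θ·ξ(ω) − G(θ))` with `G(θ) = log Σ_ω e^{θ·ξ(ω)} π(ω)`. -/
noncomputable def gibbsMeasureN {S : Type*} [Fintype S] {n : ℕ}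
    (π : S → ℝ) (ξ : Fin n → S → ℤ) (θ : Fin n → ℝ) (ω : S) : ℝ :=
  π ω * Real.exp ((∑ i : Fin n, θ i * (ξ i ω : ℝ)) -
    Real.log (∑ ω' : S, Real.exp (∑ i : Fin n, θ i * (ξ i ω' : ℝ)) * π ω'))

/-- The `i`-th macroscopic flux
`Φᵢ(θ) = Σ r(ω₁,ω₂;ω₁',ω₂')(ξᵢ(ω₂')−ξᵢ(ω₂)) π_θ(ω₁) π_θ(ω₂)`. -/
noncomputable def macroFluxN {S : Type*} [Fintype S] {n : ℕ}
    (r : S → S → S → S → ℝ) (π : S → ℝ) (ξ : Fin n → S → ℤ)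
    (i : Fin n) (θ : Fin n → ℝ) : ℝ :=
  ∑ ω₁ : S, ∑ ω₂ : S, ∑ ω₁' : S, ∑ ω₂' : S,
    r ω₁ ω₂ ω₁' ω₂' * ((ξ i ω₂' : ℝ) - (ξ i ω₂ : ℝ)) *
      gibbsMeasureN π ξ θ ω₁ * gibbsMeasureN π ξ θ ω₂

namespace OnsagerAux

variable {S : Type*} [Fintype S] {n : ℕ}

/-- linear part `θ ↦ θ · ξ(ω)` -/
noncomputable def sfun (ξ : Fin n → S → ℤ) (θ : Fin n → ℝ) (ω : S) : ℝ :=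
  ∑ i : Fin n, θ i * (ξ i ω : ℝ)

/-- partition function -/
noncomputable def Zfun (π : S → ℝ) (ξ : Fin n → S → ℤ) (θ : Fin n → ℝ) : ℝ :=
  ∑ ω : S, Real.exp (sfun ξ θ ω) * π ω

variable (π : S → ℝ) (ξ : Fin n → S → ℤ)

lemma gibbs_def (θ : Fin n → ℝ) (ω : S) :
    gibbsMeasureN π ξ θ ω = π ω * Real.exp (sfun ξ θ ω - Real.log (Zfun π ξ θ)) := rfl

variable {π}

lemma Zpos (hπ0 : ∀ ω, 0 ≤ π ω) (hπ1 : ∑ ω : S, π ω = 1) (θ : Fin n → ℝ) :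
    0 < Zfun π ξ θ := by
  have hne : (∑ ω : S, π ω) ≠ 0 := by rw [hπ1]; norm_num
  obtain ⟨ω, -, hω⟩ := Finset.exists_ne_zero_of_sum_ne_zero hne
  have hωpos : 0 < π ω := (hπ0 ω).lt_of_ne (Ne.symm hω)
  refine Finset.sum_pos' (fun ω' _ => mul_nonneg (Real.exp_pos _).le (hπ0 ω'))
    ⟨ω, Finset.mem_univ ω, by positivity⟩

lemma gibbs_eq (hπ0 : ∀ ω, 0 ≤ π ω) (hπ1 : ∑ ω : S, π ω = 1) (θ : Fin n → ℝ) (ω : S) :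
    gibbsMeasureN π ξ θ ω = π ω * Real.exp (sfun ξ θ ω) / Zfun π ξ θ := by
  rw [gibbs_def, Real.exp_sub, Real.exp_log (Zpos ξ hπ0 hπ1 θ)]
  ring

lemma sum_gibbs (hπ0 : ∀ ω, 0 ≤ π ω) (hπ1 : ∑ ω : S, π ω = 1) (θ : Fin n → ℝ) :
    ∑ ω : S, gibbsMeasureN π ξ θ ω = 1 := by
  have hZ := Zpos ξ hπ0 hπ1 θ
  simp only [gibbs_eq ξ hπ0 hπ1]
  rw [← Finset.sum_div, div_eq_one_iff_eq hZ.ne']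
  exact Finset.sum_congr rfl fun ω _ => mul_comm _ _

variable {ξ}
variable {r : S → S → S → S → ℝ}

/-- reversibility of the tilted measure -/
lemma key (hr : ∀ a b c d : S, 0 ≤ r a b c d)
    (hA : ∀ a b c d : S, 0 < r a b c d → ∀ i : Fin n, ξ i a + ξ i b = ξ i c + ξ i d)
    (hπ0 : ∀ ω, 0 ≤ π ω) (hπ1 : ∑ ω : S, π ω = 1)
    (hC : ∀ a b c d : S, π a * π b * r a b c d = π d * π c * r d c b a)
    (θ : Fin n → ℝ) (a b c d : S) :
    gibbsMeasureN π ξ θ a * gibbsMeasureN π ξ θ b * r a b c d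
      = gibbsMeasureN π ξ θ d * gibbsMeasureN π ξ θ c * r d c b a := by
  simp only [gibbs_eq ξ hπ0 hπ1]
  rcases (hr a b c d).eq_or_lt with h0 | hpos
  · have hrr : r a b c d = 0 := h0.symm
    have h2 : π d * π c * r d c b a = 0 := by rw [← hC a b c d, hrr, mul_zero]
    rw [hrr, mul_zero]
    symm
    calc π d * Real.exp (sfun ξ θ d) / Zfun π ξ θ *
          (π c * Real.exp (sfun ξ θ c) / Zfun π ξ θ) * r d c b a
        = π d * π c * r d c b a *
            (Real.exp (sfun ξ θ d) * Real.exp (sfun ξ θ c)) /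
            (Zfun π ξ θ * Zfun π ξ θ) := by ring
      _ = 0 := by rw [h2, zero_mul, zero_div]
  · have hs : sfun ξ θ a + sfun ξ θ b = sfun ξ θ c + sfun ξ θ d := by
      unfold sfun
      rw [← Finset.sum_add_distrib, ← Finset.sum_add_distrib]
      refine Finset.sum_congr rfl fun i _ => ?_
      have h := hA a b c d hpos i
      have h' : (ξ i a : ℝ) + (ξ i b : ℝ) = (ξ i c : ℝ) + (ξ i d : ℝ) := by
        exact_mod_cast congrArg (Int.cast : ℤ → ℝ) h
      rw [← mul_add, ← mul_add, h']
    have hE : Real.exp (sfun ξ θ a) * Real.exp (sfun ξ θ b)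
        = Real.exp (sfun ξ θ d) * Real.exp (sfun ξ θ c) := by
      rw [← Real.exp_add, ← Real.exp_add]
      congr 1
      linarith
    calc π a * Real.exp (sfun ξ θ a) / Zfun π ξ θ *
          (π b * Real.exp (sfun ξ θ b) / Zfun π ξ θ) * r a b c d
        = π a * π b * r a b c d *
            (Real.exp (sfun ξ θ a) * Real.exp (sfun ξ θ b)) /
            (Zfun π ξ θ * Zfun π ξ θ) := by ring
      _ = π d * π c * r d c b a *
            (Real.exp (sfun ξ θ d) * Real.exp (sfun ξ θ c)) /
            (Zfun π ξ θ * Zfun π ξ θ) := by rw [hC a b c d, hE]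
      _ = _ := by ring

lemma sum4_rev (F : S → S → S → S → ℝ) :
    (∑ a : S, ∑ b : S, ∑ c : S, ∑ d : S, F a b c d)
      = ∑ a : S, ∑ b : S, ∑ c : S, ∑ d : S, F d c b a := by
  have pack : ∀ G : S × S × S × S → ℝ,
      (∑ x : S × S × S × S, G x) = ∑ a : S, ∑ b : S, ∑ c : S, ∑ d : S, G (a, b, c, d) := by
    intro G
    rw [Fintype.sum_prod_type]
    refine Finset.sum_congr rfl fun a _ => ?_
    rw [Fintype.sum_prod_type]
    refine Finset.sum_congr rfl fun b _ => ?_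
    rw [Fintype.sum_prod_type]
  rw [← pack fun x => F x.1 x.2.1 x.2.2.1 x.2.2.2,
    ← pack fun x => F x.2.2.2 x.2.2.1 x.2.1 x.1]
  exact Fintype.sum_equiv
    ⟨fun x => (x.2.2.2, x.2.2.1, x.2.1, x.1), fun x => (x.2.2.2, x.2.2.1, x.2.1, x.1),
      fun x => rfl, fun x => rfl⟩ _ _ fun x => rfl

lemma sum2_swap (F : S → S → ℝ) :
    (∑ a : S, ∑ b : S, F a b) = ∑ a : S, ∑ b : S, F b a :=
  Finset.sum_comm

noncomputable def Rtot (r : S → S → S → S → ℝ) (a b : S) : ℝ := ∑ c : S, ∑ d : S, r a b c d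

lemma flux_eq (hr : ∀ a b c d : S, 0 ≤ r a b c d)
    (hA : ∀ a b c d : S, 0 < r a b c d → ∀ i : Fin n, ξ i a + ξ i b = ξ i c + ξ i d)
    (hπ0 : ∀ ω, 0 ≤ π ω) (hπ1 : ∑ ω : S, π ω = 1)
    (hC : ∀ a b c d : S, π a * π b * r a b c d = π d * π c * r d c b a)
    (i : Fin n) (θ : Fin n → ℝ) :
    macroFluxN r π ξ i θ = ∑ a : S, ∑ b : S,
      Rtot r a b * ((ξ i a : ℝ) - (ξ i b : ℝ)) * gibbsMeasureN π ξ θ a * gibbsMeasureN π ξ θ b := by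
  have h0 : macroFluxN r π ξ i θ =
      (∑ a : S, ∑ b : S, ∑ c : S, ∑ d : S,
        gibbsMeasureN π ξ θ a * gibbsMeasureN π ξ θ b * r a b c d * (ξ i d : ℝ))
      - (∑ a : S, ∑ b : S, ∑ c : S, ∑ d : S,
        gibbsMeasureN π ξ θ a * gibbsMeasureN π ξ θ b * r a b c d * (ξ i b : ℝ)) := by
    unfold macroFluxN
    rw [← Finset.sum_sub_distrib]
    refine Finset.sum_congr rfl fun a _ => ?_
    rw [← Finset.sum_sub_distrib]
    refine Finset.sum_congr rfl fun b _ => ?_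
    rw [← Finset.sum_sub_distrib]
    refine Finset.sum_congr rfl fun c _ => ?_
    rw [← Finset.sum_sub_distrib]
    refine Finset.sum_congr rfl fun d _ => ?_
    ring
  have h1 : (∑ a : S, ∑ b : S, ∑ c : S, ∑ d : S,
        gibbsMeasureN π ξ θ a * gibbsMeasureN π ξ θ b * r a b c d * (ξ i d : ℝ))
      = ∑ a : S, ∑ b : S, Rtot r a b * (ξ i a : ℝ) * gibbsMeasureN π ξ θ a * gibbsMeasureN π ξ θ b := by
    calc (∑ a : S, ∑ b : S, ∑ c : S, ∑ d : S,
          gibbsMeasureN π ξ θ a * gibbsMeasureN π ξ θ b * r a b c d * (ξ i d : ℝ))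
        = ∑ a : S, ∑ b : S, ∑ c : S, ∑ d : S,
          gibbsMeasureN π ξ θ d * gibbsMeasureN π ξ θ c * r d c b a * (ξ i d : ℝ) := by
          refine Finset.sum_congr rfl fun a _ => Finset.sum_congr rfl fun b _ =>
            Finset.sum_congr rfl fun c _ => Finset.sum_congr rfl fun d _ => ?_
          rw [key hr hA hπ0 hπ1 hC θ]
      _ = ∑ a : S, ∑ b : S, ∑ c : S, ∑ d : S,
          gibbsMeasureN π ξ θ a * gibbsMeasureN π ξ θ b * r a b c d * (ξ i a : ℝ) :=
          sum4_rev fun a b c d =>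
            gibbsMeasureN π ξ θ d * gibbsMeasureN π ξ θ c * r d c b a * (ξ i d : ℝ)
      _ = ∑ a : S, ∑ b : S, Rtot r a b * (ξ i a : ℝ) * gibbsMeasureN π ξ θ a * gibbsMeasureN π ξ θ b := by
          refine Finset.sum_congr rfl fun a _ => Finset.sum_congr rfl fun b _ => ?_
          simp only [Rtot, Finset.sum_mul]
          refine Finset.sum_congr rfl fun c _ => Finset.sum_congr rfl fun d _ => ?_
          ring
  have h2 : (∑ a : S, ∑ b : S, ∑ c : S, ∑ d : S,
        gibbsMeasureN π ξ θ a * gibbsMeasureN π ξ θ b * r a b c d * (ξ i b : ℝ))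
      = ∑ a : S, ∑ b : S, Rtot r a b * (ξ i b : ℝ) * gibbsMeasureN π ξ θ a * gibbsMeasureN π ξ θ b := by
    refine Finset.sum_congr rfl fun a _ => Finset.sum_congr rfl fun b _ => ?_
    simp only [Rtot, Finset.sum_mul]
    refine Finset.sum_congr rfl fun c _ => Finset.sum_congr rfl fun d _ => ?_
    ring
  rw [h0, h1, h2, ← Finset.sum_sub_distrib]
  refine Finset.sum_congr rfl fun a _ => ?_
  rw [← Finset.sum_sub_distrib]
  refine Finset.sum_congr rfl fun b _ => ?_
  ring

lemma flux_cov (hr : ∀ a b c d : S, 0 ≤ r a b c d)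
    (hA : ∀ a b c d : S, 0 < r a b c d → ∀ i : Fin n, ξ i a + ξ i b = ξ i c + ξ i d)
    (hπ0 : ∀ ω, 0 ≤ π ω) (hπ1 : ∑ ω : S, π ω = 1)
    (hC : ∀ a b c d : S, π a * π b * r a b c d = π d * π c * r d c b a)
    (hD : ∀ a b c : S,
      Rtot r a b + Rtot r b c + Rtot r c a = Rtot r a c + Rtot r c b + Rtot r b a)
    (ω₀ : S) (i : Fin n) (θ : Fin n → ℝ) :
    macroFluxN r π ξ i θ =
      (∑ ω : S, (Rtot r ω ω₀ - Rtot r ω₀ ω) * (ξ i ω : ℝ) * gibbsMeasureN π ξ θ ω)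
        - (∑ ω : S, (ξ i ω : ℝ) * gibbsMeasureN π ξ θ ω) *
          (∑ ω : S, (Rtot r ω ω₀ - Rtot r ω₀ ω) * gibbsMeasureN π ξ θ ω) := by
  have hanti : ∀ a b : S, Rtot r a b - Rtot r b a
      = (Rtot r a ω₀ - Rtot r ω₀ a) - (Rtot r b ω₀ - Rtot r ω₀ b) := by
    intro a b
    have h := hD a b ω₀
    linarith
  calc macroFluxN r π ξ i θ
      = ∑ a : S, ∑ b : S, Rtot r a b * ((ξ i a : ℝ) - (ξ i b : ℝ)) *
          gibbsMeasureN π ξ θ a * gibbsMeasureN π ξ θ b := flux_eq hr hA hπ0 hπ1 hC i θ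
    _ = (∑ a : S, ∑ b : S, Rtot r a b * (ξ i a : ℝ) *
          gibbsMeasureN π ξ θ a * gibbsMeasureN π ξ θ b)
        - ∑ a : S, ∑ b : S, Rtot r a b * (ξ i b : ℝ) *
          gibbsMeasureN π ξ θ a * gibbsMeasureN π ξ θ b := by
        rw [← Finset.sum_sub_distrib]
        refine Finset.sum_congr rfl fun a _ => ?_
        rw [← Finset.sum_sub_distrib]
        exact Finset.sum_congr rfl fun b _ => by ring
    _ = (∑ a : S, ∑ b : S, Rtot r a b * (ξ i a : ℝ) *
          gibbsMeasureN π ξ θ a * gibbsMeasureN π ξ θ b)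
        - ∑ a : S, ∑ b : S, Rtot r b a * (ξ i a : ℝ) *
          gibbsMeasureN π ξ θ b * gibbsMeasureN π ξ θ a := by
        rw [sum2_swap fun a b => Rtot r a b * (ξ i b : ℝ) *
          gibbsMeasureN π ξ θ a * gibbsMeasureN π ξ θ b]
    _ = ∑ a : S, ∑ b : S,
          ((Rtot r a ω₀ - Rtot r ω₀ a) - (Rtot r b ω₀ - Rtot r ω₀ b)) * (ξ i a : ℝ) *
          gibbsMeasureN π ξ θ a * gibbsMeasureN π ξ θ b := by
        rw [← Finset.sum_sub_distrib]
        refine Finset.sum_congr rfl fun a _ => ?_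
        rw [← Finset.sum_sub_distrib]
        refine Finset.sum_congr rfl fun b _ => ?_
        rw [← hanti a b]
        ring
    _ = (∑ a : S, (Rtot r a ω₀ - Rtot r ω₀ a) * (ξ i a : ℝ) * gibbsMeasureN π ξ θ a *
          (∑ b : S, gibbsMeasureN π ξ θ b))
        - ∑ a : S, (ξ i a : ℝ) * gibbsMeasureN π ξ θ a *
          (∑ b : S, (Rtot r b ω₀ - Rtot r ω₀ b) * gibbsMeasureN π ξ θ b) := by
        rw [← Finset.sum_sub_distrib]
        refine Finset.sum_congr rfl fun a _ => ?_
        rw [Finset.mul_sum, Finset.mul_sum, ← Finset.sum_sub_distrib]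
        exact Finset.sum_congr rfl fun b _ => by ring
    _ = _ := by
        rw [sum_gibbs ξ hπ0 hπ1 θ]
        simp only [mul_one]
        rw [← Finset.sum_mul]

noncomputable def sLin (ξ : Fin n → S → ℤ) (ω : S) : (Fin n → ℝ) →L[ℝ] ℝ :=
  ∑ i : Fin n, (ξ i ω : ℝ) • ContinuousLinearMap.proj i

lemma sLin_apply (ξ : Fin n → S → ℤ) (ω : S) (v : Fin n → ℝ) :
    sLin ξ ω v = sfun ξ v ω := by
  simp [sLin, sfun, mul_comm]

lemma sLin_single (ξ : Fin n → S → ℤ) (ω : S) (j : Fin n) :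
    sLin ξ ω (Pi.single j 1) = (ξ j ω : ℝ) := by
  rw [sLin_apply]
  simp [sfun, Pi.single_apply, ite_mul]

lemma hasFDerivAt_sfun (ξ : Fin n → S → ℤ) (ω : S) (θ : Fin n → ℝ) :
    HasFDerivAt (fun θ => sfun ξ θ ω) (sLin ξ ω) θ :=
  ((sLin ξ ω).hasFDerivAt).congr_of_eventuallyEq
    (Filter.Eventually.of_forall fun θ' => (sLin_apply ξ ω θ').symm)

noncomputable def Zlin (π : S → ℝ) (ξ : Fin n → S → ℤ) (θ : Fin n → ℝ) :
    (Fin n → ℝ) →L[ℝ] ℝ :=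
  ∑ ω : S, π ω • (Real.exp (sfun ξ θ ω) • sLin ξ ω)

lemma hasFDerivAt_Z (θ : Fin n → ℝ) : HasFDerivAt (Zfun π ξ) (Zlin π ξ θ) θ := by
  show HasFDerivAt (fun θ => ∑ ω : S, Real.exp (sfun ξ θ ω) * π ω) (Zlin π ξ θ) θ
  exact HasFDerivAt.fun_sum fun ω _ => ((hasFDerivAt_sfun ξ ω θ).exp).mul_const (π ω)

noncomputable def Dgibbs (π : S → ℝ) (ξ : Fin n → S → ℤ) (θ : Fin n → ℝ) (ω : S) :
    (Fin n → ℝ) →L[ℝ] ℝ :=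
  π ω • (Real.exp (sfun ξ θ ω - Real.log (Zfun π ξ θ)) •
    (sLin ξ ω - (Zfun π ξ θ)⁻¹ • Zlin π ξ θ))

lemma hasFDerivAt_gibbs (hπ0 : ∀ ω, 0 ≤ π ω) (hπ1 : ∑ ω : S, π ω = 1)
    (θ : Fin n → ℝ) (ω : S) :
    HasFDerivAt (fun θ => gibbsMeasureN π ξ θ ω) (Dgibbs π ξ θ ω) θ := by
  have hlog : HasFDerivAt (fun θ => Real.log (Zfun π ξ θ))
      ((Zfun π ξ θ)⁻¹ • Zlin π ξ θ) θ :=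
    (hasFDerivAt_Z θ).log (Zpos ξ hπ0 hπ1 θ).ne'
  exact (((hasFDerivAt_sfun ξ ω θ).sub hlog).exp).const_mul (π ω)

noncomputable def Fpot (π : S → ℝ) (ξ : Fin n → S → ℤ) (g : S → ℝ) (θ : Fin n → ℝ) : ℝ :=
  ∑ ω : S, g ω * gibbsMeasureN π ξ θ ω

noncomputable def DFpot (π : S → ℝ) (ξ : Fin n → S → ℤ) (g : S → ℝ) (θ : Fin n → ℝ) :
    (Fin n → ℝ) →L[ℝ] ℝ :=
  ∑ ω : S, g ω • Dgibbs π ξ θ ω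

lemma hasFDerivAt_Fpot (hπ0 : ∀ ω, 0 ≤ π ω) (hπ1 : ∑ ω : S, π ω = 1)
    (g : S → ℝ) (θ : Fin n → ℝ) :
    HasFDerivAt (Fpot π ξ g) (DFpot π ξ g θ) θ := by
  show HasFDerivAt (fun θ => ∑ ω : S, g ω * gibbsMeasureN π ξ θ ω) _ θ
  exact HasFDerivAt.fun_sum fun ω _ => (hasFDerivAt_gibbs hπ0 hπ1 θ ω).const_mul (g ω)

lemma DFpot_single (hπ0 : ∀ ω, 0 ≤ π ω) (hπ1 : ∑ ω : S, π ω = 1)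
    (g : S → ℝ) (θ : Fin n → ℝ) (j : Fin n) :
    DFpot π ξ g θ (Pi.single j 1)
      = (∑ ω : S, g ω * (ξ j ω : ℝ) * gibbsMeasureN π ξ θ ω)
        - (∑ ω : S, (ξ j ω : ℝ) * gibbsMeasureN π ξ θ ω) *
          (∑ ω : S, g ω * gibbsMeasureN π ξ θ ω) := by
  have hZlin : Zlin π ξ θ (Pi.single j 1)
      = ∑ ω : S, π ω * (Real.exp (sfun ξ θ ω) * (ξ j ω : ℝ)) := by
    simp [Zlin, ContinuousLinearMap.sum_apply, sLin_single]
  have hsum : (Zfun π ξ θ)⁻¹ * (∑ ω' : S, π ω' * (Real.exp (sfun ξ θ ω') * (ξ j ω' : ℝ)))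
      = ∑ ω' : S, (ξ j ω' : ℝ) * gibbsMeasureN π ξ θ ω' := by
    rw [Finset.mul_sum]
    refine Finset.sum_congr rfl fun ω' _ => ?_
    rw [gibbs_eq ξ hπ0 hπ1]
    ring
  have hD : ∀ ω : S, Dgibbs π ξ θ ω (Pi.single j 1)
      = gibbsMeasureN π ξ θ ω *
          ((ξ j ω : ℝ) - ∑ ω' : S, (ξ j ω' : ℝ) * gibbsMeasureN π ξ θ ω') := by
    intro ω
    simp only [Dgibbs, ContinuousLinearMap.smul_apply, ContinuousLinearMap.sub_apply,
      sLin_single, smul_eq_mul, hZlin, hsum]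
    rw [gibbs_def]
    ring
  simp only [DFpot, ContinuousLinearMap.sum_apply, ContinuousLinearMap.smul_apply,
    smul_eq_mul, hD]
  calc ∑ ω : S, g ω * (gibbsMeasureN π ξ θ ω *
          ((ξ j ω : ℝ) - ∑ ω' : S, (ξ j ω' : ℝ) * gibbsMeasureN π ξ θ ω'))
      = (∑ ω : S, g ω * (ξ j ω : ℝ) * gibbsMeasureN π ξ θ ω)
        - ∑ ω : S, (g ω * gibbsMeasureN π ξ θ ω) *
            (∑ ω' : S, (ξ j ω' : ℝ) * gibbsMeasureN π ξ θ ω') := by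
        rw [← Finset.sum_sub_distrib]
        exact Finset.sum_congr rfl fun ω _ => by ring
    _ = _ := by
        rw [← Finset.sum_mul]
        ring

lemma contDiff_sfun (ξ : Fin n → S → ℤ) (ω : S) :
    ContDiff ℝ 2 (fun θ : Fin n → ℝ => sfun ξ θ ω) := by
  apply ContDiff.sum
  intro i _
  exact (ContinuousLinearMap.proj i :
    (Fin n → ℝ) →L[ℝ] ℝ).contDiff.mul contDiff_const

lemma contDiff_gibbs (hπ0 : ∀ ω, 0 ≤ π ω) (hπ1 : ∑ ω : S, π ω = 1) (ω : S) :
    ContDiff ℝ 2 (fun θ : Fin n → ℝ => gibbsMeasureN π ξ θ ω) := by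
  have hZ : ContDiff ℝ 2 (Zfun π ξ) := by
    show ContDiff ℝ 2 (fun θ : Fin n → ℝ => ∑ ω : S, Real.exp (sfun ξ θ ω) * π ω)
    exact ContDiff.sum fun ω _ => ((contDiff_sfun ξ ω).exp).mul contDiff_const
  have hlog : ContDiff ℝ 2 fun θ : Fin n → ℝ => Real.log (Zfun π ξ θ) :=
    hZ.log fun θ => (Zpos ξ hπ0 hπ1 θ).ne'
  exact contDiff_const.mul ((contDiff_sfun ξ ω).sub hlog).exp

lemma contDiff_Fpot (hπ0 : ∀ ω, 0 ≤ π ω) (hπ1 : ∑ ω : S, π ω = 1) (g : S → ℝ) :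
    ContDiff ℝ 2 (Fpot π ξ g) := by
  show ContDiff ℝ 2 fun θ : Fin n → ℝ => ∑ ω : S, g ω * gibbsMeasureN π ξ θ ω
  exact ContDiff.sum fun ω _ => contDiff_const.mul (contDiff_gibbs hπ0 hπ1 ω)

end OnsagerAux

open OnsagerAux

/-- n-component Onsager relations — the Jacobian of `θ ↦ Φ(θ)`
is symmetric: `∂Φᵢ/∂θⱼ = ∂Φⱼ/∂θᵢ`. -/
theorem onsager_relations_n_components {S : Type*} [Fintype S] {n : ℕ} (hn : 2 ≤ n)
    (ξ : Fin n → S → ℤ) (r : S → S → S → S → ℝ) (π : S → ℝ)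
    (hr : ∀ ω₁ ω₂ ω₁' ω₂' : S, 0 ≤ r ω₁ ω₂ ω₁' ω₂')
    (hA : ∀ ω₁ ω₂ ω₁' ω₂' : S, 0 < r ω₁ ω₂ ω₁' ω₂' →
      ∀ i : Fin n, ξ i ω₁ + ξ i ω₂ = ξ i ω₁' + ξ i ω₂')
    (hπ0 : ∀ ω : S, 0 ≤ π ω) (hπ1 : ∑ ω : S, π ω = 1)
    (hC : ∀ ω₁ ω₂ ω₁' ω₂' : S,
      π ω₁ * π ω₂ * r ω₁ ω₂ ω₁' ω₂' = π ω₂' * π ω₁' * r ω₂' ω₁' ω₂ ω₁)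
    (hD : ∀ ω₁ ω₂ ω₃ : S,
      (∑ ω₁' : S, ∑ ω₂' : S, r ω₁ ω₂ ω₁' ω₂')
        + (∑ ω₁' : S, ∑ ω₂' : S, r ω₂ ω₃ ω₁' ω₂')
        + (∑ ω₁' : S, ∑ ω₂' : S, r ω₃ ω₁ ω₁' ω₂')
      = (∑ ω₁' : S, ∑ ω₂' : S, r ω₁ ω₃ ω₁' ω₂')
        + (∑ ω₁' : S, ∑ ω₂' : S, r ω₃ ω₂ ω₁' ω₂')
        + (∑ ω₁' : S, ∑ ω₂' : S, r ω₂ ω₁ ω₁' ω₂')) :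
    (∀ i : Fin n, Differentiable ℝ (macroFluxN r π ξ i)) ∧
    ∀ (i j : Fin n) (θ : Fin n → ℝ),
      fderiv ℝ (macroFluxN r π ξ i) θ (Pi.single j 1) =
        fderiv ℝ (macroFluxN r π ξ j) θ (Pi.single i 1) := by
  classical
  have hne : Nonempty S := by
    by_contra h
    have : IsEmpty S := not_nonempty_iff.mp h
    rw [Finset.univ_eq_empty, Finset.sum_empty] at hπ1
    norm_num at hπ1
  obtain ⟨ω₀⟩ := hne
  have hD' : ∀ a b c : S, Rtot r a b + Rtot r b c + Rtot r c a
      = Rtot r a c + Rtot r c b + Rtot r b a := hD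
  set g : S → ℝ := fun ω => Rtot r ω ω₀ - Rtot r ω₀ ω with hg
  have hF := contDiff_Fpot (π := π) (ξ := ξ) hπ0 hπ1 g
  have hfd : ∀ θ : Fin n → ℝ, fderiv ℝ (Fpot π ξ g) θ = DFpot π ξ g θ :=
    fun θ => (hasFDerivAt_Fpot hπ0 hπ1 g θ).fderiv
  have hflux : ∀ i : Fin n, macroFluxN r π ξ i
      = fun θ => fderiv ℝ (Fpot π ξ g) θ (Pi.single i 1) := by
    intro i
    funext θ
    rw [hfd θ, DFpot_single hπ0 hπ1 g θ i, flux_cov hr hA hπ0 hπ1 hC hD' ω₀ i θ]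
  have hd1 : ContDiff ℝ 1 (fderiv ℝ (Fpot π ξ g)) := hF.fderiv_right (by norm_num)
  have hdiff1 := hd1.differentiable one_ne_zero
  constructor
  · intro i
    rw [hflux i]
    exact hdiff1.clm_apply (differentiable_const _)
  · intro i j θ
    have hF' : ∀ y, HasFDerivAt (Fpot π ξ g) (fderiv ℝ (Fpot π ξ g) y) y :=
      fun y => ((hF.differentiable (by norm_num)) y).hasFDerivAt
    have hf'' : HasFDerivAt (fderiv ℝ (Fpot π ξ g))
        (fderiv ℝ (fderiv ℝ (Fpot π ξ g)) θ) θ := (hdiff1 θ).hasFDerivAt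
    have hsym := second_derivative_symmetric hF' hf'' (Pi.single i 1) (Pi.single j 1)
    rw [hflux i, hflux j,
      fderiv_clm_apply (hdiff1 θ) (differentiableAt_const _),
      fderiv_clm_apply (hdiff1 θ) (differentiableAt_const _)]
    simpa using hsym.symm
end

section
/- (Stationarity of the product measures.) Assume S is a finite set, ξ, η : S → ℤ, r : S×S×S×S → [0,∞) satisfies condition (A), π is a probability measure on S satisfying condition (C), and condition (D) holds. Fix N ≥ 2 and (θ,τ) ∈ ℝ², and let π^N_{θ,τ} := ⊗_{j∈𝕋_N} π_{θ,τ} be the product measure on Ω^N = S^{𝕋_N}. Then for every function f : Ω^N → ℝ, Σ_{ω̄∈Ω^N} π^N_{θ,τ}(ω̄) (L^N f)(ω̄) = 0; i.e., every canonical product measure π^N_{θ,τ} is stationary for the Markov process with generator L^N. -/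
open scoped BigOperators

/-- The infinitesimal generator `L^N` of the interacting particle system on the
discrete torus `𝕋_N = ℤ/Nℤ`: nearest-neighbour pairs `(ω_j, ω_{j+1})` jump to
`(ω', ω'')` with rate `r(ω_j, ω_{j+1}; ω', ω'')`. -/
def generator {S : Type*} [Fintype S] {N : ℕ} [NeZero N]
    (r : S → S → S → S → ℝ) (f : (ZMod N → S) → ℝ) (cfg : ZMod N → S) : ℝ :=
  ∑ j : ZMod N, ∑ ω' : S, ∑ ω'' : S,
    r (cfg j) (cfg (j + 1)) ω' ω'' *
      (f (Function.update (Function.update cfg j ω') (j + 1) ω'') - f cfg)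

lemma gibbs_db {S : Type*} [Fintype S]
    (ξ η : S → ℤ) (r : S → S → S → S → ℝ) (π : S → ℝ)
    (hr : ∀ ω₁ ω₂ ω₁' ω₂' : S, 0 ≤ r ω₁ ω₂ ω₁' ω₂')
    (hA : ∀ ω₁ ω₂ ω₁' ω₂' : S, 0 < r ω₁ ω₂ ω₁' ω₂' →
      ξ ω₁ + ξ ω₂ = ξ ω₁' + ξ ω₂' ∧ η ω₁ + η ω₂ = η ω₁' + η ω₂')
    (hC : ∀ ω₁ ω₂ ω₁' ω₂' : S,
      π ω₁ * π ω₂ * r ω₁ ω₂ ω₁' ω₂' = π ω₂' * π ω₁' * r ω₂' ω₁' ω₂ ω₁)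
    (θ τ : ℝ) (a b c d : S) :
    gibbsMeasure π ξ η θ τ a * gibbsMeasure π ξ η θ τ b * r a b c d
      = gibbsMeasure π ξ η θ τ d * gibbsMeasure π ξ η θ τ c * r d c b a := by
  unfold gibbsMeasure
  set G := Real.log (∑ ω' : S, Real.exp (θ * (ξ ω' : ℝ) + τ * (η ω' : ℝ)) * π ω') with hG
  rcases (hr a b c d).eq_or_lt with h0 | hpos
  · have h1 : π d * π c * r d c b a = 0 := by rw [← hC a b c d, ← h0]; ring
    rw [← h0]
    linear_combination (-(Real.exp (θ * (ξ d : ℝ) + τ * (η d : ℝ) - G) *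
      Real.exp (θ * (ξ c : ℝ) + τ * (η c : ℝ) - G))) * h1
  · obtain ⟨hξ, hη⟩ := hA a b c d hpos
    have h1 : (ξ a : ℝ) + (ξ b : ℝ) = (ξ c : ℝ) + (ξ d : ℝ) := by exact_mod_cast hξ
    have h2 : (η a : ℝ) + (η b : ℝ) = (η c : ℝ) + (η d : ℝ) := by exact_mod_cast hη
    have hE : (θ * (ξ a : ℝ) + τ * (η a : ℝ) - G) + (θ * (ξ b : ℝ) + τ * (η b : ℝ) - G)
        = (θ * (ξ d : ℝ) + τ * (η d : ℝ) - G) + (θ * (ξ c : ℝ) + τ * (η c : ℝ) - G) := by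
      linear_combination θ * h1 + τ * h2
    have e1 : Real.exp (θ * (ξ a : ℝ) + τ * (η a : ℝ) - G) *
        Real.exp (θ * (ξ b : ℝ) + τ * (η b : ℝ) - G)
        = Real.exp (θ * (ξ d : ℝ) + τ * (η d : ℝ) - G) *
          Real.exp (θ * (ξ c : ℝ) + τ * (η c : ℝ) - G) := by
      rw [← Real.exp_add, ← Real.exp_add, hE]
    have hπr := hC a b c d
    linear_combination (Real.exp (θ * (ξ a : ℝ) + τ * (η a : ℝ) - G) *
        Real.exp (θ * (ξ b : ℝ) + τ * (η b : ℝ) - G)) * hπr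
      + (π d * π c * r d c b a) * e1

lemma prod_double_update {S : Type*} {N : ℕ} [NeZero N]
    (μ : S → ℝ) (cfg : ZMod N → S) (j : ZMod N) (hj : j ≠ j + 1) (a b : S) :
    ∏ k : ZMod N, μ (Function.update (Function.update cfg j a) (j + 1) b k)
      = μ b * (μ a * ∏ k ∈ (Finset.univ \ {j + 1}) \ {j}, μ (cfg k)) := by
  have hmem : j ∈ (Finset.univ \ {j + 1} : Finset (ZMod N)) := by
    simp [Finset.mem_sdiff, hj]
  calc ∏ k : ZMod N, μ (Function.update (Function.update cfg j a) (j + 1) b k)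
      = ∏ k : ZMod N,
          Function.update (Function.update (μ ∘ cfg) j (μ a)) (j + 1) (μ b) k := by
        refine Finset.prod_congr rfl fun k _ => ?_
        rw [← Function.comp_update, ← Function.comp_update]
        rfl
    _ = μ b * ∏ k ∈ Finset.univ \ {j + 1}, Function.update (μ ∘ cfg) j (μ a) k := by
        rw [Finset.prod_update_of_mem (Finset.mem_univ (j + 1))]
    _ = μ b * (μ a * ∏ k ∈ (Finset.univ \ {j + 1}) \ {j}, (μ ∘ cfg) k) := by
        rw [Finset.prod_update_of_mem hmem]
    _ = μ b * (μ a * ∏ k ∈ (Finset.univ \ {j + 1}) \ {j}, μ (cfg k)) := rfl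

lemma prod_split {S : Type*} {N : ℕ} [NeZero N]
    (μ : S → ℝ) (cfg : ZMod N → S) (j : ZMod N) (hj : j ≠ j + 1) :
    ∏ k : ZMod N, μ (cfg k)
      = μ (cfg (j + 1)) * (μ (cfg j) * ∏ k ∈ (Finset.univ \ {j + 1}) \ {j}, μ (cfg k)) := by
  have h := prod_double_update μ cfg j hj (cfg j) (cfg (j + 1))
  simpa [Function.update_eq_self] using h

section
variable {S : Type*} {N : ℕ} [NeZero N]

def swapMap (j : ZMod N) (p : (ZMod N → S) × S × S) : (ZMod N → S) × S × S :=
  (Function.update (Function.update p.1 j p.2.1) (j + 1) p.2.2, p.1 j, p.1 (j + 1))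

lemma swapMap_involutive (j : ZMod N) (hj : j ≠ j + 1) :
    Function.Involutive (swapMap (S := S) j) := by
  rintro ⟨cfg, a, b⟩
  unfold swapMap
  refine Prod.ext ?_ (Prod.ext ?_ ?_)
  · funext k
    rcases eq_or_ne k j with rfl | hkj
    · simp [Function.update_of_ne hj, Function.update_self]
    · rcases eq_or_ne k (j + 1) with rfl | hkj1
      · simp [Function.update_self]
      · simp [Function.update_of_ne hkj1, Function.update_of_ne hkj]
  · simp [Function.update_of_ne hj, Function.update_self]
  · simp [Function.update_self]

end

lemma gain_eq {S : Type*} [Fintype S] {N : ℕ} [NeZero N]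
    (μ : S → ℝ) (r : S → S → S → S → ℝ)
    (hDB : ∀ a b c d : S, μ a * μ b * r a b c d = μ d * μ c * r d c b a)
    (f : (ZMod N → S) → ℝ) (j : ZMod N) (hj : j ≠ j + 1) :
    ∑ cfg : ZMod N → S, ∑ a : S, ∑ b : S,
      (∏ k : ZMod N, μ (cfg k)) * (r (cfg j) (cfg (j + 1)) a b *
        f (Function.update (Function.update cfg j a) (j + 1) b))
    = ∑ cfg : ZMod N → S, (∏ k : ZMod N, μ (cfg k)) * f cfg *
        (∑ a : S, ∑ b : S, r (cfg (j + 1)) (cfg j) a b) := by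
  classical
  set F : ((ZMod N → S) × S × S) → ℝ := fun p =>
    (∏ k : ZMod N, μ (p.1 k)) * (r (p.1 j) (p.1 (j + 1)) p.2.1 p.2.2 *
      f (Function.update (Function.update p.1 j p.2.1) (j + 1) p.2.2)) with hFdef
  have step1 : (∑ cfg : ZMod N → S, ∑ a : S, ∑ b : S,
      (∏ k : ZMod N, μ (cfg k)) * (r (cfg j) (cfg (j + 1)) a b *
        f (Function.update (Function.update cfg j a) (j + 1) b)))
      = ∑ p : (ZMod N → S) × S × S, F p := by
    rw [Fintype.sum_prod_type]
    refine Finset.sum_congr rfl fun cfg _ => ?_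
    rw [Fintype.sum_prod_type]
  have step2 : (∑ p : (ZMod N → S) × S × S, F p)
      = ∑ p : (ZMod N → S) × S × S, F (swapMap j p) :=
    (Equiv.sum_comp ((swapMap_involutive (S := S) j hj).toPerm _) F).symm
  have hF : ∀ (cfg : ZMod N → S) (a b : S), F (swapMap j (cfg, a, b))
      = (∏ k : ZMod N, μ (cfg k)) * f cfg * r (cfg (j + 1)) (cfg j) b a := by
    intro cfg a b
    have hfst : (swapMap j (swapMap j (cfg, a, b))).1 = cfg :=
      congrArg Prod.fst (swapMap_involutive (S := S) j hj (cfg, a, b))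
    have hup : Function.update (Function.update
        (Function.update (Function.update cfg j a) (j + 1) b) j
          (cfg j)) (j + 1) (cfg (j + 1)) = cfg := hfst
    have hj' : (Function.update (Function.update cfg j a) (j + 1) b) j = a := by
      rw [Function.update_of_ne hj, Function.update_self]
    have hj1 : (Function.update (Function.update cfg j a) (j + 1) b) (j + 1) = b :=
      Function.update_self _ _ _
    simp only [hFdef, swapMap]
    rw [hup, hj', hj1, prod_double_update μ cfg j hj a b,
      prod_split μ cfg j hj]
    have h := hDB a b (cfg j) (cfg (j + 1))
    set P := ∏ k ∈ (Finset.univ \ {j + 1}) \ {j}, μ (cfg k) with hP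
    linear_combination (P * f cfg) * h
  have step3 : (∑ p : (ZMod N → S) × S × S, F (swapMap j p))
      = ∑ cfg : ZMod N → S, ∑ a : S, ∑ b : S,
          (∏ k : ZMod N, μ (cfg k)) * f cfg * r (cfg (j + 1)) (cfg j) b a := by
    rw [Fintype.sum_prod_type]
    refine Finset.sum_congr rfl fun cfg _ => ?_
    rw [Fintype.sum_prod_type]
    exact Finset.sum_congr rfl fun a _ => Finset.sum_congr rfl fun b _ => hF cfg a b
  rw [step1, step2, step3]
  refine Finset.sum_congr rfl fun cfg _ => ?_
  rw [Finset.mul_sum]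
  rw [Finset.sum_comm]
  exact Finset.sum_congr rfl fun a _ => by rw [Finset.mul_sum]

lemma telescope_cycle {S : Type*} {N : ℕ} [NeZero N]
    (R : S → S → ℝ) (ω₀ : S)
    (hD' : ∀ a b : S, R a b - R b a = (R a ω₀ - R ω₀ a) - (R b ω₀ - R ω₀ b))
    (cfg : ZMod N → S) :
    ∑ j : ZMod N, (R (cfg (j + 1)) (cfg j) - R (cfg j) (cfg (j + 1))) = 0 := by
  have h1 : ∑ j : ZMod N, (R (cfg (j + 1)) (cfg j) - R (cfg j) (cfg (j + 1)))
      = ∑ j : ZMod N,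
          ((R (cfg (j + 1)) ω₀ - R ω₀ (cfg (j + 1))) - (R (cfg j) ω₀ - R ω₀ (cfg j))) :=
    Finset.sum_congr rfl fun j _ => hD' _ _
  rw [h1, Finset.sum_sub_distrib]
  have h2 : ∑ j : ZMod N, (R (cfg (j + 1)) ω₀ - R ω₀ (cfg (j + 1)))
      = ∑ j : ZMod N, (R (cfg j) ω₀ - R ω₀ (cfg j)) :=
    Fintype.sum_equiv (Equiv.addRight 1) _ _ (fun j => rfl)
  rw [h2, sub_self]

/-- the canonical product measures `π^N_{θ,τ}` are stationary for
the Markov process with generator `L^N`. -/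
theorem canonical_measure_stationary {S : Type*} [Fintype S]
    (ξ η : S → ℤ) (r : S → S → S → S → ℝ) (π : S → ℝ)
    (hr : ∀ ω₁ ω₂ ω₁' ω₂' : S, 0 ≤ r ω₁ ω₂ ω₁' ω₂')
    (hA : ∀ ω₁ ω₂ ω₁' ω₂' : S, 0 < r ω₁ ω₂ ω₁' ω₂' →
      ξ ω₁ + ξ ω₂ = ξ ω₁' + ξ ω₂' ∧ η ω₁ + η ω₂ = η ω₁' + η ω₂')
    (hπ0 : ∀ ω : S, 0 ≤ π ω) (hπ1 : ∑ ω : S, π ω = 1)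
    (hC : ∀ ω₁ ω₂ ω₁' ω₂' : S,
      π ω₁ * π ω₂ * r ω₁ ω₂ ω₁' ω₂' = π ω₂' * π ω₁' * r ω₂' ω₁' ω₂ ω₁)
    (hD : ∀ ω₁ ω₂ ω₃ : S,
      (∑ ω₁' : S, ∑ ω₂' : S, r ω₁ ω₂ ω₁' ω₂')
        + (∑ ω₁' : S, ∑ ω₂' : S, r ω₂ ω₃ ω₁' ω₂')
        + (∑ ω₁' : S, ∑ ω₂' : S, r ω₃ ω₁ ω₁' ω₂')
      = (∑ ω₁' : S, ∑ ω₂' : S, r ω₁ ω₃ ω₁' ω₂')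
        + (∑ ω₁' : S, ∑ ω₂' : S, r ω₃ ω₂ ω₁' ω₂')
        + (∑ ω₁' : S, ∑ ω₂' : S, r ω₂ ω₁ ω₁' ω₂'))
    (N : ℕ) [NeZero N] (hN : 2 ≤ N) (θ τ : ℝ) :
    ∀ f : (ZMod N → S) → ℝ,
      ∑ cfg : ZMod N → S,
        (∏ j : ZMod N, gibbsMeasure π ξ η θ τ (cfg j)) * generator r f cfg = 0 := by
  intro f
  classical
  rcases isEmpty_or_nonempty S with hS | hS
  · haveI : IsEmpty (ZMod N → S) := ⟨fun g => IsEmpty.false (g 0)⟩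
    simp
  · obtain ⟨ω₀⟩ := hS
    haveI : Fact (1 < N) := ⟨hN⟩
    have hj : ∀ j : ZMod N, j ≠ j + 1 := by
      intro j h
      have h1 : (1 : ZMod N) = 0 := (left_eq_add).mp h
      exact one_ne_zero h1
    set μ := gibbsMeasure π ξ η θ τ with hμ
    have hDB : ∀ a b c d : S, μ a * μ b * r a b c d = μ d * μ c * r d c b a :=
      fun a b c d => gibbs_db ξ η r π hr hA hC θ τ a b c d
    set R : S → S → ℝ := fun x y => ∑ c : S, ∑ d : S, r x y c d with hR
    have hD' : ∀ a b : S, R a b - R b a = (R a ω₀ - R ω₀ a) - (R b ω₀ - R ω₀ b) := by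
      intro a b
      have h := hD a b ω₀
      simp only [hR]
      linarith [h]
    -- per-bond identity
    have key : ∀ j : ZMod N,
        (∑ cfg : ZMod N → S, ∑ a : S, ∑ b : S,
          (∏ k : ZMod N, μ (cfg k)) * (r (cfg j) (cfg (j + 1)) a b *
            (f (Function.update (Function.update cfg j a) (j + 1) b) - f cfg)))
        = ∑ cfg : ZMod N → S, (∏ k : ZMod N, μ (cfg k)) * f cfg *
            (R (cfg (j + 1)) (cfg j) - R (cfg j) (cfg (j + 1))) := by
      intro j
      calc (∑ cfg : ZMod N → S, ∑ a : S, ∑ b : S,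
          (∏ k : ZMod N, μ (cfg k)) * (r (cfg j) (cfg (j + 1)) a b *
            (f (Function.update (Function.update cfg j a) (j + 1) b) - f cfg)))
          = ∑ cfg : ZMod N → S, ∑ a : S, ∑ b : S,
            ((∏ k : ZMod N, μ (cfg k)) * (r (cfg j) (cfg (j + 1)) a b *
              f (Function.update (Function.update cfg j a) (j + 1) b))
            - (∏ k : ZMod N, μ (cfg k)) * (r (cfg j) (cfg (j + 1)) a b * f cfg)) := by
            refine Finset.sum_congr rfl fun cfg _ => Finset.sum_congr rfl fun a _ =>
              Finset.sum_congr rfl fun b _ => by ring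
        _ = (∑ cfg : ZMod N → S, ∑ a : S, ∑ b : S,
              (∏ k : ZMod N, μ (cfg k)) * (r (cfg j) (cfg (j + 1)) a b *
                f (Function.update (Function.update cfg j a) (j + 1) b)))
            - ∑ cfg : ZMod N → S, ∑ a : S, ∑ b : S,
              (∏ k : ZMod N, μ (cfg k)) * (r (cfg j) (cfg (j + 1)) a b * f cfg) := by
            simp only [Finset.sum_sub_distrib]
        _ = (∑ cfg : ZMod N → S, (∏ k : ZMod N, μ (cfg k)) * f cfg *
              (∑ a : S, ∑ b : S, r (cfg (j + 1)) (cfg j) a b))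
            - ∑ cfg : ZMod N → S, (∏ k : ZMod N, μ (cfg k)) * f cfg *
              (∑ a : S, ∑ b : S, r (cfg j) (cfg (j + 1)) a b) := by
            rw [gain_eq μ r hDB f j (hj j)]
            congr 1
            refine Finset.sum_congr rfl fun cfg _ => ?_
            simp only [Finset.mul_sum]
            exact Finset.sum_congr rfl fun a _ =>
              Finset.sum_congr rfl fun b _ => by ring
        _ = ∑ cfg : ZMod N → S, (∏ k : ZMod N, μ (cfg k)) * f cfg *
              (R (cfg (j + 1)) (cfg j) - R (cfg j) (cfg (j + 1))) := by
            rw [← Finset.sum_sub_distrib]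
            exact Finset.sum_congr rfl fun cfg _ => by simp only [hR]; ring
    calc ∑ cfg : ZMod N → S, (∏ k : ZMod N, μ (cfg k)) * generator r f cfg
        = ∑ cfg : ZMod N → S, ∑ j : ZMod N, ∑ a : S, ∑ b : S,
            (∏ k : ZMod N, μ (cfg k)) * (r (cfg j) (cfg (j + 1)) a b *
              (f (Function.update (Function.update cfg j a) (j + 1) b) - f cfg)) := by
          refine Finset.sum_congr rfl fun cfg _ => ?_
          simp only [generator, Finset.mul_sum]
      _ = ∑ j : ZMod N, ∑ cfg : ZMod N → S, ∑ a : S, ∑ b : S,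
            (∏ k : ZMod N, μ (cfg k)) * (r (cfg j) (cfg (j + 1)) a b *
              (f (Function.update (Function.update cfg j a) (j + 1) b) - f cfg)) :=
          Finset.sum_comm
      _ = ∑ j : ZMod N, ∑ cfg : ZMod N → S, (∏ k : ZMod N, μ (cfg k)) * f cfg *
            (R (cfg (j + 1)) (cfg j) - R (cfg j) (cfg (j + 1))) :=
          Finset.sum_congr rfl fun j _ => key j
      _ = ∑ cfg : ZMod N → S, ∑ j : ZMod N, (∏ k : ZMod N, μ (cfg k)) * f cfg *
            (R (cfg (j + 1)) (cfg j) - R (cfg j) (cfg (j + 1))) :=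
          Finset.sum_comm
      _ = ∑ cfg : ZMod N → S, (∏ k : ZMod N, μ (cfg k)) * f cfg *
            ∑ j : ZMod N, (R (cfg (j + 1)) (cfg j) - R (cfg j) (cfg (j + 1))) := by
          refine Finset.sum_congr rfl fun cfg _ => ?_
          rw [Finset.mul_sum]
      _ = 0 := by
          refine Finset.sum_eq_zero fun cfg _ => ?_
          rw [telescope_cycle R ω₀ hD' cfg, mul_zero]
end
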